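/- Let G = GL_n over a field k, B the upper triangular Borel, T the diagonal torus, and 𝔤̃ the Grothendieck resolution. For any hB(k) ∈ (G/B)(k), the images under dπ₂ of the tangent spaces of 𝔤̃ ×_𝔤 𝔤̃ at the points (gB(k), 0, hB(k)), as gB(k) ranges over the T-fixed points of G/B, span the entire tangent space of 𝔤̃ at (0, hB(k)): ∑_{gB(k) ∈ (G/B)^T} dπ₂(T_{(gB(k),0,hB(k))}(𝔤̃ ×_𝔤 𝔤̃)) = T_{(0,hB(k))} 𝔤̃. -/
import Mathlib


open Matrix

/-- The Borel subalgebra of upper triangular matrices `𝔟`. -/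
def borel0 (k : Type*) [Field k] (n : ℕ) : Submodule k (Matrix (Fin n) (Fin n) k) where
  carrier := {M | ∀ i j : Fin n, j < i → M i j = 0}
  add_mem' := by intro a b ha hb i j hij; simp [Matrix.add_apply, ha i j hij, hb i j hij]
  zero_mem' := by intro i j hij; simp
  smul_mem' := by intro c a ha i j hij; simp [Matrix.smul_apply, ha i j hij]

/-- The strictly lower triangular matrices, identified with the tangent space `T_{gB}(G/B)`
via the open chart `u ↦ guB`, `U⁻ ↪ G/B`. -/
def strictLowerSub (k : Type*) [Field k] (n : ℕ) : Submodule k (Matrix (Fin n) (Fin n) k) where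
  carrier := {M | ∀ i j : Fin n, i ≤ j → M i j = 0}
  add_mem' := by intro a b ha hb i j hij; simp [Matrix.add_apply, ha i j hij, hb i j hij]
  zero_mem' := by intro i j hij; simp
  smul_mem' := by intro c a ha i j hij; simp [Matrix.smul_apply, ha i j hij]

/-- The Borel subalgebra `g 𝔟 g⁻¹` (the Borel corresponding to the point `gB ∈ G/B`). -/
noncomputable def borelPos (k : Type*) [Field k] (n : ℕ) (g : Matrix (Fin n) (Fin n) k) :
    Submodule k (Matrix (Fin n) (Fin n) k) :=
  (borel0 k n).map ((LinearMap.mulLeft k g).comp (LinearMap.mulRight k g⁻¹))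

namespace SpanAux

variable {k : Type*} [Field k] {n : ℕ}

theorem mem_borelPos_of {g T M : Matrix (Fin n) (Fin n) k}
    (hT : T ∈ borel0 k n) (hM : g * (T * g⁻¹) = M) : M ∈ borelPos k n g :=
  Submodule.mem_map.mpr ⟨T, hT, by
    simpa only [LinearMap.comp_apply, LinearMap.mulLeft_apply, LinearMap.mulRight_apply] using hM⟩

theorem mul_hinv {h : Matrix (Fin n) (Fin n) k} (hh : IsUnit h) : h * h⁻¹ = 1 :=
  Matrix.mul_nonsing_inv h ((Matrix.isUnit_iff_isUnit_det h).mp hh)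

theorem hinv_mul {h : Matrix (Fin n) (Fin n) k} (hh : IsUnit h) : h⁻¹ * h = 1 :=
  Matrix.nonsing_inv_mul h ((Matrix.isUnit_iff_isUnit_det h).mp hh)

theorem permMatrix_inv (w : Equiv.Perm (Fin n)) :
    (Equiv.Perm.permMatrix k w)⁻¹ = Equiv.Perm.permMatrix k (w⁻¹) := by
  apply Matrix.inv_eq_right_inv
  rw [← PEquiv.toMatrix_trans, ← Equiv.toPEquiv_trans]
  simp [Equiv.Perm.inv_def]

theorem mul_vecMulVec_mul (A : Matrix (Fin n) (Fin n) k) (x y : Fin n → k)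
    (B : Matrix (Fin n) (Fin n) k) :
    A * (vecMulVec x y * B) = vecMulVec (A *ᵥ x) (y ᵥ* B) := by
  ext a b
  calc (A * (vecMulVec x y * B)) a b
      = ∑ i, ∑ t, A a i * (x i * y t * B t b) := by
        simp [mul_apply, vecMulVec_apply, Finset.mul_sum]
    _ = (∑ i, A a i * x i) * (∑ t, y t * B t b) := by
        rw [Finset.sum_mul_sum]
        exact Finset.sum_congr rfl fun i _ => Finset.sum_congr rfl fun t _ => by ring
    _ = vecMulVec (A *ᵥ x) (y ᵥ* B) a b := by
        simp [vecMulVec_apply, mulVec, vecMul, dotProduct]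

theorem vecMulVec_add_left (a b c : Fin n → k) :
    vecMulVec (a + b) c = vecMulVec a c + vecMulVec b c := by
  ext i j; simp [vecMulVec_apply, add_mul]

theorem vecMulVec_smul_left (r : k) (a c : Fin n → k) :
    vecMulVec (r • a) c = r • vecMulVec a c := by
  ext i j; simp [vecMulVec_apply, mul_assoc]

/-- `vecMulVec z` as a linear map in the second argument. -/
def vecMulVecRight (z : Fin n → k) : (Fin n → k) →ₗ[k] Matrix (Fin n) (Fin n) k where
  toFun q := vecMulVec z q
  map_add' a b := by ext i j; simp [vecMulVec_apply, mul_add]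
  map_smul' r a := by ext i j; simp [vecMulVec_apply]; ring

theorem exists_dual_of_notMem {V : Type*} [AddCommGroup V] [Module k V]
    (U : Submodule k V) (x : V) (hx : x ∉ U) :
    ∃ f : V →ₗ[k] k, f x = 1 ∧ ∀ u ∈ U, f u = 0 := by
  have hne : U.mkQ x ≠ 0 := by
    simpa [Submodule.Quotient.mk_eq_zero] using hx
  obtain ⟨g, hg⟩ : ∃ g : Module.Dual k (V ⧸ U), g (U.mkQ x) ≠ 0 := by
    by_contra hall
    push_neg at hall
    exact hne ((Module.forall_dual_apply_eq_zero_iff k _).mp hall)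
  refine ⟨(g (U.mkQ x))⁻¹ • (g.comp U.mkQ), ?_, ?_⟩
  · simp only [LinearMap.smul_apply, LinearMap.comp_apply, smul_eq_mul]
    exact inv_mul_cancel₀ hg
  · intro u hu
    simp [(Submodule.Quotient.mk_eq_zero _).mpr hu]

theorem exists_perm_good (v φ : Fin n → k) (c : Fin n)
    (hgood : ∀ t, v t ≠ 0 → φ t ≠ 0 → t = c) :
    ∃ w : Equiv.Perm (Fin n), ∀ a b, v a ≠ 0 → φ b ≠ 0 → w a ≤ w b := by
  classical
  set key : Fin n → ℕ := fun t =>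
    if v t ≠ 0 then (if φ t ≠ 0 then 1 else 0) else (if φ t ≠ 0 then 2 else 3) with hkey
  refine ⟨(Tuple.sort key)⁻¹, ?_⟩
  intro a b hva hφb
  by_contra hlt
  push_neg at hlt
  have hmono : key b ≤ key a := by
    have := Tuple.monotone_sort key (le_of_lt hlt)
    simpa using this
  have ka : key a = if φ a ≠ 0 then 1 else 0 := by simp [hkey, hva]
  have kb : key b = if v b ≠ 0 then 1 else 2 := by simp [hkey, hφb]
  have hφa : φ a ≠ 0 := by
    by_contra hφa
    rw [ka, if_neg (not_not_intro hφa), kb] at hmono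
    split at hmono <;> omega
  have hvb : v b ≠ 0 := by
    by_contra hvb
    rw [ka, kb, if_neg (not_not_intro hvb)] at hmono
    split at hmono <;> omega
  have : a = b := (hgood a hva hφa).trans (hgood b hvb hφb).symm
  subst this
  exact absurd le_rfl (not_le.mpr hlt)

theorem vecMulVec_mem_borelPos_perm (w : Equiv.Perm (Fin n)) (v φ : Fin n → k)
    (hw : ∀ a b, v a ≠ 0 → φ b ≠ 0 → w a ≤ w b) :
    vecMulVec v φ ∈ borelPos k n (Equiv.Perm.permMatrix k w) := by
  apply mem_borelPos_of (T := (vecMulVec v φ).submatrix ⇑w.symm ⇑w.symm)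
  · intro i j hij
    simp only [submatrix_apply, vecMulVec_apply]
    by_cases hv : v (w.symm i) = 0
    · simp [hv]
    by_cases hφ : φ (w.symm j) = 0
    · simp [hφ]
    have := hw _ _ hv hφ
    simp only [Equiv.apply_symm_apply] at this
    exact absurd this (not_le.mpr hij)
  · rw [permMatrix_inv, PEquiv.mul_toMatrix_toPEquiv, PEquiv.toMatrix_toPEquiv_mul]
    ext a b
    simp [Equiv.Perm.inv_def]

theorem vecMulVec_mem_borelPos {h : Matrix (Fin n) (Fin n) k} (hh : IsUnit h)
    (v φ : Fin n → k)
    (hvφ : ∀ s t : Fin n, (h⁻¹ *ᵥ v) s ≠ 0 → (φ ᵥ* h) t ≠ 0 → s ≤ t) :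
    vecMulVec v φ ∈ borelPos k n h := by
  apply mem_borelPos_of (T := vecMulVec (h⁻¹ *ᵥ v) (φ ᵥ* h))
  · intro i j hij
    simp only [vecMulVec_apply]
    by_cases hx : (h⁻¹ *ᵥ v) i = 0
    · simp [hx]
    by_cases hy : (φ ᵥ* h) j = 0
    · simp [hy]
    exact absurd (hvφ i j hx hy) (not_le.mpr hij)
  · rw [mul_vecMulVec_mul, mulVec_mulVec, mul_hinv hh, one_mulVec, vecMul_vecMul,
      mul_hinv hh, vecMul_one]

theorem good_mem {h : Matrix (Fin n) (Fin n) k} (hh : IsUnit h) (j : Fin n)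
    (v φ : Fin n → k) (c : Fin n)
    (hF : ∀ i, j < i → (h⁻¹ *ᵥ v) i = 0) (hΦ : ∀ i, i < j → (φ ᵥ* h) i = 0)
    (hgood : ∀ t, v t ≠ 0 → φ t ≠ 0 → t = c) :
    vecMulVec v φ ∈
      ⨆ w : Equiv.Perm (Fin n),
        (borelPos k n (Equiv.Perm.permMatrix k w) ⊓ borelPos k n h) := by
  obtain ⟨w, hw⟩ := exists_perm_good v φ c hgood
  refine le_iSup
    (fun w : Equiv.Perm (Fin n) =>
      borelPos k n (Equiv.Perm.permMatrix k w) ⊓ borelPos k n h) w ?_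
  refine Submodule.mem_inf.mpr ⟨vecMulVec_mem_borelPos_perm w v φ hw, ?_⟩
  apply vecMulVec_mem_borelPos hh
  intro s t hs ht
  have h1 : s ≤ j := by
    by_contra hc
    exact hs (hF s (not_le.mp hc))
  have h2 : j ≤ t := by
    by_contra hc
    exact ht (hΦ t (not_le.mp hc))
  exact le_trans h1 h2

/-- The image of the coordinate subspace `{u | u i = 0 for i ≥ j}` under `h`,
i.e. the flag subspace `F_{j-1}` spanned by the first `j` columns of `h` (exclusive). -/
def lowImage (k : Type*) [Field k] {n : ℕ} (h : Matrix (Fin n) (Fin n) k) (j : Fin n) :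
    Submodule k (Fin n → k) where
  carrier := {q | ∃ u : Fin n → k, (∀ i, j ≤ i → u i = 0) ∧ q = h *ᵥ u}
  add_mem' := by
    rintro a b ⟨u, hu, rfl⟩ ⟨u', hu', rfl⟩
    exact ⟨u + u', fun i hi => by simp [hu i hi, hu' i hi], by rw [Matrix.mulVec_add]⟩
  zero_mem' := ⟨0, by simp, by simp⟩
  smul_mem' := by
    rintro r a ⟨u, hu, rfl⟩
    exact ⟨r • u, fun i hi => by simp [hu i hi], by rw [Matrix.mulVec_smul]⟩

/-- Functions supported inside a set `A`. -/
def suppSub (k : Type*) [Field k] {n : ℕ} (A : Set (Fin n)) : Submodule k (Fin n → k) where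
  carrier := {q | ∀ t, t ∉ A → q t = 0}
  add_mem' := by intro a b ha hb t ht; simp [ha t ht, hb t ht]
  zero_mem' := by intro t ht; simp
  smul_mem' := by intro r a ha t ht; simp [ha t ht]

theorem claim {h : Matrix (Fin n) (Fin n) k} (hh : IsUnit h) (N : ℕ) :
    ∀ (j : Fin n), j.val ≤ N → ∀ v φ : Fin n → k,
      (∀ i, j < i → (h⁻¹ *ᵥ v) i = 0) → (∀ i, i < j → (φ ᵥ* h) i = 0) →
      vecMulVec v φ ∈
        ⨆ w : Equiv.Perm (Fin n),
          (borelPos k n (Equiv.Perm.permMatrix k w) ⊓ borelPos k n h) := by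
  induction N using Nat.strong_induction_on with
  | _ N IH =>
  intro j hjN v φ hv hφ
  classical
  -- existence of a vector in `F_j \ F_{j-1}`, recorded via support cardinality
  have hex : ∃ m : ℕ, ∃ u : Fin n → k,
      (∀ i, j < i → u i = 0) ∧ u j ≠ 0 ∧
      (Finset.univ.filter fun t => (h *ᵥ u) t ≠ 0).card = m :=
    ⟨_, Pi.single j 1, fun i hi => Pi.single_eq_of_ne (ne_of_gt hi) 1, by simp, rfl⟩
  obtain ⟨u0, hu0supp, hu0j, hu0card⟩ := Nat.find_spec hex
  set z : Fin n → k := h *ᵥ u0 with hzdef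
  -- minimality of the support of z
  have hmin : ∀ y : Fin n → k, (∀ i, j ≤ i → y i = 0) →
      (∀ t, (h *ᵥ y) t ≠ 0 → z t ≠ 0) → h *ᵥ y = 0 := by
    intro y hysupp hysub
    by_contra hy0
    obtain ⟨t0, ht0⟩ : ∃ t, (h *ᵥ y) t ≠ 0 := by
      by_contra hall
      push_neg at hall
      exact hy0 (funext hall)
    set r : k := z t0 / (h *ᵥ y) t0 with hrdef
    have hlin : h *ᵥ (u0 - r • y) = z - r • (h *ᵥ y) := by
      rw [Matrix.mulVec_sub, Matrix.mulVec_smul]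
    have hcard : (Finset.univ.filter fun t => (h *ᵥ (u0 - r • y)) t ≠ 0).card
        < Nat.find hex := by
      have hsub : (Finset.univ.filter fun t => (h *ᵥ (u0 - r • y)) t ≠ 0)
          ⊆ (Finset.univ.filter fun t => z t ≠ 0).erase t0 := by
        intro t htmem
        rw [Finset.mem_filter] at htmem
        have hval : (h *ᵥ (u0 - r • y)) t = z t - r * (h *ᵥ y) t := by
          rw [hlin]; simp
        have hzt : z t ≠ 0 := by
          intro hzt0
          have hyt : (h *ᵥ y) t = 0 := by
            by_contra hyt
            exact (hysub t hyt) hzt0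
          rw [hval, hzt0, hyt, mul_zero, sub_zero] at htmem
          exact htmem.2 rfl
        have htne : t ≠ t0 := by
          intro hteq
          subst hteq
          rw [hval, hrdef, div_mul_cancel₀ _ ht0, sub_self] at htmem
          exact htmem.2 rfl
        exact Finset.mem_erase.mpr ⟨htne, Finset.mem_filter.mpr ⟨Finset.mem_univ t, hzt⟩⟩
      calc (Finset.univ.filter fun t => (h *ᵥ (u0 - r • y)) t ≠ 0).card
          ≤ ((Finset.univ.filter fun t => z t ≠ 0).erase t0).card := Finset.card_le_card hsub
        _ < (Finset.univ.filter fun t => z t ≠ 0).card :=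
            Finset.card_erase_lt_of_mem
              (Finset.mem_filter.mpr ⟨Finset.mem_univ t0, hysub t0 ht0⟩)
        _ = Nat.find hex := hu0card
    refine Nat.find_min hex hcard ⟨u0 - r • y, ?_, ?_, rfl⟩
    · intro i hi
      simp [hu0supp i hi, hysupp i (le_of_lt hi)]
    · have : y j = 0 := hysupp j le_rfl
      simp [this, hu0j]
  -- split v along z
  set x : Fin n → k := h⁻¹ *ᵥ v with hxdef
  have hvx : v = h *ᵥ x := by
    rw [hxdef, mulVec_mulVec, mul_hinv hh, one_mulVec]
  set r0 : k := x j / u0 j with hr0def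
  set x' : Fin n → k := x - r0 • u0 with hx'def
  have hx'supp : ∀ i, j ≤ i → x' i = 0 := by
    intro i hi
    rcases eq_or_lt_of_le hi with heq | hlt
    · subst heq
      simp [hx'def, hr0def, div_mul_cancel₀ _ hu0j]
    · simp [hx'def, hv i hlt, hu0supp i hlt, ← hxdef]
  have hvsplit : v = (h *ᵥ x') + r0 • z := by
    rw [hvx, hx'def, Matrix.mulVec_sub, Matrix.mulVec_smul, hzdef]
    abel
  rw [hvsplit, vecMulVec_add_left, vecMulVec_smul_left]
  apply Submodule.add_mem
  · -- the part in F_{j-1}, by induction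
    by_cases hj0 : j.val = 0
    · have hx'0 : x' = 0 := funext fun i => hx'supp i (by
        rw [Fin.le_def, hj0]; exact Nat.zero_le _)
      have hz0 : vecMulVec (0 : Fin n → k) φ = 0 := by
        ext a b; simp [vecMulVec_apply]
      simp [hx'0, hz0]
    · have hjpos : 0 < j.val := Nat.pos_of_ne_zero hj0
      set j' : Fin n := ⟨j.val - 1, lt_of_le_of_lt (Nat.sub_le _ _) j.isLt⟩ with hj'def
      refine IH (j.val - 1) (lt_of_lt_of_le (Nat.sub_lt hjpos one_pos) hjN) j' le_rfl
        (h *ᵥ x') φ ?_ ?_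
      · intro i hi
        have : x' i = 0 := hx'supp i (by
          rw [Fin.le_def]
          rw [Fin.lt_def] at hi
          simp only [hj'def] at hi
          omega)
        rw [mulVec_mulVec, hinv_mul hh, one_mulVec]
        exact this
      · intro i hi
        refine hφ i ?_
        rw [Fin.lt_def] at hi ⊢
        simp only [hj'def] at hi
        omega
  · -- the z part
    apply Submodule.smul_mem
    -- functionals ψ c
    have hψex : ∀ c : Fin n, ∃ ψ : Fin n → k,
        (∀ i, i < j → (ψ ᵥ* h) i = 0) ∧
        (z c ≠ 0 → ψ c = 1 ∧ ∀ t, z t ≠ 0 → t ≠ c → ψ t = 0) := by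
      intro c
      by_cases hc : z c = 0
      · exact ⟨0, by simp, fun hzc => absurd hc hzc⟩
      · -- build U and the dual functional
        set U : Submodule k (Fin n → k) :=
          lowImage k h j ⊔ suppSub k {t | z t ≠ 0 ∧ t ≠ c} with hUdef
        have hnotmem : Pi.single c 1 ∉ U := by
          intro hmem
          rw [hUdef, Submodule.mem_sup] at hmem
          obtain ⟨a, ha, b, hb, hab⟩ := hmem
          obtain ⟨ua, hua, rfl⟩ := ha
          have hazero : h *ᵥ ua = 0 := by
            apply hmin ua hua
            intro t hat
            by_contra hzt
            have hbt : b t = 0 := hb t (by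
              intro hmem'
              exact hmem'.1 hzt)
            have htc : t ≠ c := by
              intro hteq
              rw [hteq] at hzt
              exact hc hzt
            have := congrFun hab t
            rw [Pi.add_apply, hbt, add_zero, Pi.single_eq_of_ne htc] at this
            exact hat this
          rw [hazero, zero_add] at hab
          have hbc : b c = 0 := hb c (by
            intro hmem'
            exact hmem'.2 rfl)
          rw [hab, Pi.single_eq_same] at hbc
          exact one_ne_zero hbc
        obtain ⟨f, hf1, hf0⟩ := exists_dual_of_notMem U (Pi.single c 1) hnotmem
        refine ⟨fun t => f (Pi.single t 1), ?_, fun _ => ⟨hf1, ?_⟩⟩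
        · intro i hij
          have hsum : (fun s => h s i) = ∑ t, h t i • (Pi.single t 1 : Fin n → k) := by
            ext s
            simp [Pi.single_apply]
          have hcol : ((fun t => f (Pi.single t 1)) ᵥ* h) i = f (fun s => h s i) := by
            rw [hsum, map_sum]
            have hlhs : ((fun t => f (Pi.single t 1)) ᵥ* h) i
                = ∑ t, f (Pi.single t 1) * h t i := rfl
            rw [hlhs]
            simp only [_root_.map_smul, smul_eq_mul]
            exact Finset.sum_congr rfl fun t _ => mul_comm _ _
          rw [hcol]
          apply hf0
          apply Submodule.mem_sup_left
          refine ⟨Pi.single i 1, fun t htj => Pi.single_eq_of_ne ?_ 1, ?_⟩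
          · exact ne_of_gt (lt_of_lt_of_le hij htj)
          · funext s
            simp [Matrix.mulVec_single]
        · intro t hzt htc
          apply hf0
          apply Submodule.mem_sup_right
          intro s hs
          refine Pi.single_eq_of_ne (fun hst => hs ?_) 1
          rw [hst]
          exact ⟨hzt, htc⟩
    -- decompose φ along the support of z
    choose ψ hψΦ hψgood using hψex
    set S : Finset (Fin n) := Finset.univ.filter (fun t => z t ≠ 0) with hSdef
    set ρ : Fin n → k := φ - ∑ c ∈ S, φ c • ψ c with hρdef
    have hρS : ∀ t, z t ≠ 0 → ρ t = 0 := by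
      intro t ht
      have htS : t ∈ S := Finset.mem_filter.mpr ⟨Finset.mem_univ t, ht⟩
      rw [hρdef]
      simp only [Pi.sub_apply, Finset.sum_apply, Pi.smul_apply, smul_eq_mul]
      rw [Finset.sum_eq_single t]
      · rw [(hψgood t ht).1, mul_one, sub_self]
      · intro c hcS hct
        have hcz : z c ≠ 0 := (Finset.mem_filter.mp hcS).2
        rw [(hψgood c hcz).2 t ht (Ne.symm hct), mul_zero]
      · intro htS'
        exact absurd htS htS'
    have hρΦ : ∀ i, i < j → (ρ ᵥ* h) i = 0 := by
      intro i hi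
      have hρh : ρ ᵥ* h = (φ ᵥ* h) - ∑ c ∈ S, φ c • (ψ c ᵥ* h) := by
        have hlin : h.vecMulLinear ρ
            = h.vecMulLinear φ - ∑ c ∈ S, φ c • h.vecMulLinear (ψ c) := by
          rw [hρdef, map_sub, map_sum]
          simp only [_root_.map_smul]
        simpa only [Matrix.vecMulLinear_apply] using hlin
      rw [hρh]
      simp only [Pi.sub_apply, Finset.sum_apply, Pi.smul_apply, smul_eq_mul]
      rw [hφ i hi, Finset.sum_eq_zero, sub_self]
      intro c _
      rw [hψΦ c i hi, mul_zero]
    have hzF : ∀ i, j < i → (h⁻¹ *ᵥ z) i = 0 := by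
      intro i hi
      rw [hzdef, mulVec_mulVec, hinv_mul hh, one_mulVec]
      exact hu0supp i hi
    have hsplit2 : vecMulVec z φ
        = vecMulVec z ρ + ∑ c ∈ S, φ c • vecMulVec z (ψ c) := by
      have hφdec : φ = ρ + ∑ c ∈ S, φ c • ψ c := by
        rw [hρdef, sub_add_cancel]
      have h1 : (vecMulVecRight z) φ
          = (vecMulVecRight z) ρ + ∑ c ∈ S, φ c • (vecMulVecRight z) (ψ c) := by
        conv_lhs => rw [hφdec]
        rw [map_add, map_sum]
        simp only [_root_.map_smul]
      simpa only [vecMulVecRight, LinearMap.coe_mk, AddHom.coe_mk] using h1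
    rw [hsplit2]
    refine Submodule.add_mem _ ?_ (Submodule.sum_mem _ ?_)
    · refine good_mem hh j z ρ j hzF hρΦ ?_
      intro t ht hρt
      exact absurd (hρS t ht) hρt
    · intro c hcS
      have hcz : z c ≠ 0 := (Finset.mem_filter.mp hcS).2
      refine Submodule.smul_mem _ _ (good_mem hh j z (ψ c) c hzF (hψΦ c) ?_)
      intro t ht hψt
      by_contra htc
      exact hψt ((hψgood c hcz).2 t ht htc)

theorem key {h : Matrix (Fin n) (Fin n) k} (hh : IsUnit h) :
    borelPos k n h ≤
      ⨆ w : Equiv.Perm (Fin n),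
        (borelPos k n (Equiv.Perm.permMatrix k w) ⊓ borelPos k n h) := by
  intro M hM
  obtain ⟨T, hT, rfl⟩ := Submodule.mem_map.mp hM
  have hrep : ((LinearMap.mulLeft k h).comp (LinearMap.mulRight k h⁻¹)) T
      = ∑ p : Fin n × Fin n,
          T p.1 p.2 • vecMulVec (fun a => h a p.1) (fun b => h⁻¹ p.2 b) := by
    ext a b
    simp only [LinearMap.comp_apply, LinearMap.mulLeft_apply, LinearMap.mulRight_apply,
      Matrix.mul_apply, Matrix.sum_apply, Matrix.smul_apply, vecMulVec_apply, smul_eq_mul,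
      Finset.mul_sum, Fintype.sum_prod_type]
    exact Finset.sum_congr rfl fun i _ => Finset.sum_congr rfl fun t _ => by ring
  rw [hrep]
  apply Submodule.sum_mem
  rintro ⟨i, jj⟩ -
  by_cases hij : jj < i
  · rw [hT i jj hij, zero_smul]
    exact Submodule.zero_mem _
  · apply Submodule.smul_mem
    have hij' : i ≤ jj := not_lt.mp hij
    apply claim hh jj.val jj le_rfl
    · intro i' hi'
      have hcol : (fun a => h a i) = h *ᵥ Pi.single i 1 := by
        funext s
        simp [Matrix.mulVec_single]
      rw [hcol, mulVec_mulVec, hinv_mul hh, one_mulVec]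
      exact Pi.single_eq_of_ne (ne_of_gt (lt_of_le_of_lt hij' hi')) 1
    · intro i' hi'
      have hrow : (fun b => h⁻¹ jj b) = Pi.single jj 1 ᵥ* h⁻¹ := by
        funext s
        simp [Matrix.single_vecMul]
      rw [hrow, vecMul_vecMul, hinv_mul hh, vecMul_one]
      exact Pi.single_eq_of_ne (ne_of_lt hi') 1

end SpanAux

/-- `dπ₂` applied to the tangent spaces of `𝔤̃ ×_𝔤 𝔤̃` at the points `(gB, 0, hB)`, for `gB`
ranging over the `T`-fixed points of `G/B` (the permutation flags `wB`), spans the whole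
tangent space `T_{(0,hB)}𝔤̃ = h𝔟h⁻¹ ⊕ T_{hB}(G/B)`.  Under the identifications of
Lemmas 1.4 and 1.5, `dπ₂(T_{(wB,0,hB)}(𝔤̃ ×_𝔤 𝔤̃)) = (w𝔟w⁻¹ ∩ h𝔟h⁻¹) ⊕ T_{hB}(G/B)`. -/
theorem span_of_dpi2_images (k : Type*) [Field k] (n : ℕ) (hn : 0 < n)
    (h : Matrix (Fin n) (Fin n) k) (hh : IsUnit h) :
    (⨆ w : Equiv.Perm (Fin n),
        ((borelPos k n (Equiv.Perm.permMatrix k w) ⊓ borelPos k n h).prod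
          (strictLowerSub k n)))
      = (borelPos k n h).prod (strictLowerSub k n) := by
  classical
  apply le_antisymm
  · exact iSup_le fun w => Submodule.prod_mono inf_le_right le_rfl
  · rintro ⟨M, Y⟩ hp
    rw [Submodule.mem_prod] at hp
    obtain ⟨h1, h2⟩ := hp
    have hM : M ∈ ⨆ w : Equiv.Perm (Fin n),
        (borelPos k n (Equiv.Perm.permMatrix k w) ⊓ borelPos k n h) :=
      SpanAux.key hh h1
    have lift1 : ((M, 0) : Matrix (Fin n) (Fin n) k × Matrix (Fin n) (Fin n) k) ∈
        ⨆ w : Equiv.Perm (Fin n),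
          ((borelPos k n (Equiv.Perm.permMatrix k w) ⊓ borelPos k n h).prod
            (strictLowerSub k n)) := by
      have hmap : (⨆ w : Equiv.Perm (Fin n),
          (borelPos k n (Equiv.Perm.permMatrix k w) ⊓ borelPos k n h)).map
            (LinearMap.inl k (Matrix (Fin n) (Fin n) k) (Matrix (Fin n) (Fin n) k))
          ≤ ⨆ w : Equiv.Perm (Fin n),
            ((borelPos k n (Equiv.Perm.permMatrix k w) ⊓ borelPos k n h).prod
              (strictLowerSub k n)) := by
        rw [Submodule.map_iSup]
        refine iSup_mono fun w => ?_
        rintro q hq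
        rw [Submodule.mem_map] at hq
        obtain ⟨X, hX, rfl⟩ := hq
        exact Submodule.mem_prod.mpr ⟨hX, (strictLowerSub k n).zero_mem⟩
      exact hmap (Submodule.mem_map_of_mem hM)
    have lift2 : ((0, Y) : Matrix (Fin n) (Fin n) k × Matrix (Fin n) (Fin n) k) ∈
        ⨆ w : Equiv.Perm (Fin n),
          ((borelPos k n (Equiv.Perm.permMatrix k w) ⊓ borelPos k n h).prod
            (strictLowerSub k n)) := by
      refine le_iSup (fun w : Equiv.Perm (Fin n) =>
        (borelPos k n (Equiv.Perm.permMatrix k w) ⊓ borelPos k n h).prod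
          (strictLowerSub k n)) 1 ?_
      exact Submodule.mem_prod.mpr ⟨Submodule.zero_mem _, h2⟩
    have hsum := Submodule.add_mem _ lift1 lift2
    simpa using hsum
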